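/- The function Ai is entire (complex-differentiable on all of ℂ, with entire derivative), and it satisfies the Airy differential equation: for every z ∈ ℂ, the second derivative of Ai at z equals z·Ai(z). -/

import Mathlib

open Complex

/-- The Airy function `Ai`, defined by its Maclaurin series. -/
noncomputable def Ai (z : ℂ) : ℂ :=
  (((1 / ((3 : ℝ) ^ ((2 : ℝ) / 3) * Real.pi)) : ℝ) : ℂ) *
    ∑' n : ℕ,
      ((Real.Gamma ((n + 1) / 3) / n.factorial * Real.sin (2 * (n + 1) * Real.pi / 3) : ℝ) : ℂ) *
        ((((3 : ℝ) ^ ((1 : ℝ) / 3) : ℝ) : ℂ) * z) ^ n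

/-!
With the constants absorbed into the coefficients, `Ai z = ∑ aₙ zⁿ` where `a₂ = 0` and
`(n + 2) (n + 3) aₙ₊₃ = aₙ`, by `Γ (x + 1) = x Γ x` and the `2π`-periodicity of `sin`.
The recurrence makes `∑ ‖aₙ‖ rⁿ` converge for every `r` by a ratio test with step `3` (the usual
ratio test fails because every third coefficient vanishes), so the series can be differentiated
termwise twice. The second derivative has coefficients `(n + 1) (n + 2) aₙ₊₂`, which vanish for
`n = 0` and equal `aₙ₋₁` for `n ≥ 1`: it is the series of `z Ai z`.
-/

open Filter

lemma summable_of_nonneg_of_eventually_add_le_mul {f : ℕ → ℝ} {k : ℕ} [NeZero k] {r : ℝ}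
    (hr : r < 1) (hf : 0 ≤ f) (h : ∀ᶠ n in atTop, f (n + k) ≤ r * f n) : Summable f := by
  let e : Fin k × ℕ ≃ ℕ := (Equiv.prodComm _ _).trans (Nat.divModEquiv k).symm
  rw [← e.summable_iff, summable_prod_of_nonneg (f := f ∘ e) fun _ => hf _]
  refine ⟨fun i => summable_of_ratio_norm_eventually_le hr ?_, .of_finite⟩
  have hi : Tendsto (fun m : ℕ => m * k + (i : ℕ)) atTop atTop :=
    tendsto_atTop_mono (fun m => (Nat.le_mul_of_pos_right m (Nat.pos_of_neZero k)).trans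
      (Nat.le_add_right _ _)) tendsto_id
  filter_upwards [hi.eventually h] with m hm
  simp only [Function.comp_apply, e, Equiv.trans_apply, Equiv.prodComm_apply, Prod.swap_prod_mk,
    Nat.divModEquiv_symm_apply, Real.norm_of_nonneg (hf _)]
  convert hm using 2
  ring

def derivCoeffs (c : ℕ → ℂ) (n : ℕ) : ℂ := (n + 1) * c (n + 1)

lemma summable_norm_derivCoeffs_mul_pow {c : ℕ → ℂ}
    (hc : ∀ r : ℝ, 0 ≤ r → Summable fun n => ‖c n‖ * r ^ n) (r : ℝ) (hr : 0 ≤ r) :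
    Summable fun n => ‖derivCoeffs c n‖ * r ^ n := by
  have hs : 1 ≤ 2 * r + 1 := by linarith
  refine .of_nonneg_of_le (fun n => by positivity) (fun n => ?_)
    ((summable_nat_add_iff 1).mpr (hc (2 * r + 1) (by linarith)))
  have hpow : (n + 1 : ℝ) * r ^ n ≤ (2 * r + 1) ^ (n + 1) :=
    calc (n + 1 : ℝ) * r ^ n ≤ 2 ^ n * r ^ n := by
          gcongr; exact_mod_cast Nat.lt_two_pow_self
      _ = (2 * r) ^ n := (mul_pow _ _ _).symm
      _ ≤ (2 * r + 1) ^ n := by gcongr; linarith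
      _ ≤ (2 * r + 1) ^ (n + 1) := pow_le_pow_right₀ hs n.le_succ
  calc ‖derivCoeffs c n‖ * r ^ n = ‖c (n + 1)‖ * ((n + 1 : ℝ) * r ^ n) := by
        rw [derivCoeffs, norm_mul, ← Nat.cast_succ, Complex.norm_natCast]; push_cast; ring
    _ ≤ ‖c (n + 1)‖ * (2 * r + 1) ^ (n + 1) := by gcongr

lemma summable_coeff_mul_pow {c : ℕ → ℂ} (hc : ∀ r : ℝ, 0 ≤ r → Summable fun n => ‖c n‖ * r ^ n)
    (z : ℂ) : Summable fun n => c n * z ^ n :=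
  .of_norm (by simpa only [norm_mul, norm_pow] using hc ‖z‖ (norm_nonneg z))

lemma hasDerivAt_tsum_coeff_mul_pow {c : ℕ → ℂ}
    (hc : ∀ r : ℝ, 0 ≤ r → Summable fun n => ‖c n‖ * r ^ n) (z : ℂ) :
    HasDerivAt (fun w => ∑' n, c n * w ^ n) (∑' n, derivCoeffs c n * z ^ n) z := by
  set R := ‖z‖ + 1
  have hR : 0 < R := by positivity
  have hshift : HasDerivAt (fun w => ∑' n, c (n + 1) * w ^ (n + 1))
      (∑' n, derivCoeffs c n * z ^ n) z := by
    refine hasDerivAt_tsum_of_isPreconnected (summable_norm_derivCoeffs_mul_pow hc R hR.le)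
      Metric.isOpen_ball (convex_ball (0 : ℂ) R).isPreconnected
      (g := fun n y => c (n + 1) * y ^ (n + 1))
      (g' := fun n y => derivCoeffs c n * y ^ n) (y := z) (fun n y _ => ?_) (fun n y hy => ?_)
      (Metric.mem_ball_self hR) (by simp) (by simp [R])
    · refine ((hasDerivAt_pow (n + 1) y).const_mul (c (n + 1))).congr_deriv ?_
      rw [derivCoeffs, Nat.add_sub_cancel]
      push_cast
      ring
    · rw [norm_mul, norm_pow]
      gcongr
      simpa using (Metric.mem_ball.mp hy).le
  have hsplit : (fun w => ∑' n, c n * w ^ n) = fun w => c 0 + ∑' n, c (n + 1) * w ^ (n + 1) := by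
    funext w
    simpa using (summable_coeff_mul_pow hc w).tsum_eq_zero_add
  rw [hsplit]
  exact hshift.const_add (c 0)

lemma differentiable_tsum_coeff_mul_pow {c : ℕ → ℂ}
    (hc : ∀ r : ℝ, 0 ≤ r → Summable fun n => ‖c n‖ * r ^ n) :
    Differentiable ℂ fun w => ∑' n, c n * w ^ n :=
  fun z => (hasDerivAt_tsum_coeff_mul_pow hc z).differentiableAt

lemma deriv_tsum_coeff_mul_pow {c : ℕ → ℂ}
    (hc : ∀ r : ℝ, 0 ≤ r → Summable fun n => ‖c n‖ * r ^ n) :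
    deriv (fun w => ∑' n, c n * w ^ n) = fun z => ∑' n, derivCoeffs c n * z ^ n :=
  funext fun z => (hasDerivAt_tsum_coeff_mul_pow hc z).deriv

lemma tsum_coeff_mul_pow_eq_mul {a b : ℕ → ℂ} (hb₀ : b 0 = 0) (hb : ∀ n, b (n + 1) = a n) {z : ℂ}
    (ha : Summable fun n => a n * z ^ n) :
    ∑' n, b n * z ^ n = z * ∑' n, a n * z ^ n := by
  have hsucc : Summable fun n => b (n + 1) * z ^ (n + 1) := by
    refine (ha.mul_left z).congr fun n => ?_
    rw [hb, pow_succ]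
    ring
  rw [tsum_eq_zero_add' (f := fun n => b n * z ^ n) hsucc, hb₀, zero_mul, zero_add, ← tsum_mul_left]
  exact tsum_congr fun n => by rw [hb, pow_succ]; ring

noncomputable def airyCoeff (n : ℕ) : ℝ :=
  1 / ((3 : ℝ) ^ ((2 : ℝ) / 3) * Real.pi) *
    (Real.Gamma ((n + 1) / 3) / n.factorial * Real.sin (2 * (n + 1) * Real.pi / 3)) *
    ((3 : ℝ) ^ ((1 : ℝ) / 3)) ^ n

lemma Ai_eq_tsum : Ai = fun z => ∑' n, (airyCoeff n : ℂ) * z ^ n := by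
  funext z
  rw [Ai, ← tsum_mul_left]
  congr 1
  funext n
  simp only [airyCoeff]
  push_cast [mul_pow]
  ring

lemma airyCoeff_two : airyCoeff 2 = 0 := by
  have h : 2 * ((2 : ℝ) + 1) * Real.pi / 3 = 2 * Real.pi := by ring
  rw [airyCoeff, Nat.cast_ofNat, h, Real.sin_two_pi, mul_zero, mul_zero, zero_mul]

lemma airyCoeff_add_three (n : ℕ) : (n + 2) * (n + 3) * airyCoeff (n + 3) = airyCoeff n := by
  have hGamma : Real.Gamma (((n + 3 : ℕ) + 1) / 3) = (n + 1) / 3 * Real.Gamma ((n + 1) / 3) := by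
    rw [← Real.Gamma_add_one (by positivity)]
    congr 1
    push_cast
    ring
  have hsin : Real.sin (2 * ((n + 3 : ℕ) + 1) * Real.pi / 3) =
      Real.sin (2 * (n + 1) * Real.pi / 3) := by
    rw [← Real.sin_add_two_pi (2 * (n + 1) * Real.pi / 3)]
    congr 1
    push_cast
    ring
  have hfact : ((n + 3).factorial : ℝ) = (n + 1) * (n + 2) * (n + 3) * n.factorial := by
    push_cast [Nat.factorial_succ]
    ring
  have hcube : ((3 : ℝ) ^ ((1 : ℝ) / 3)) ^ 3 = 3 := by
    rw [← Real.rpow_natCast, ← Real.rpow_mul (by norm_num)]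
    norm_num
  rw [airyCoeff, airyCoeff, hGamma, hsin, hfact, pow_add, hcube]
  have : (n.factorial : ℝ) ≠ 0 := by positivity
  field_simp

lemma summable_norm_airyCoeff_mul_pow (r : ℝ) (hr : 0 ≤ r) :
    Summable fun n => ‖(airyCoeff n : ℂ)‖ * r ^ n := by
  refine summable_of_nonneg_of_eventually_add_le_mul (k := 3) (r := 1 / 2) (by norm_num)
    (fun n => by positivity) ?_
  filter_upwards [eventually_ge_atTop ⌈r ^ 3⌉₊] with n hn
  have hr3 : r ^ 3 ≤ n := (Nat.le_ceil _).trans (by exact_mod_cast hn)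
  have hrec : ‖(airyCoeff n : ℂ)‖ = (n + 2) * (n + 3) * ‖(airyCoeff (n + 3) : ℂ)‖ := by
    rw [← airyCoeff_add_three, Complex.norm_real, Complex.norm_real, norm_mul, norm_mul,
      Real.norm_of_nonneg (by positivity : (0 : ℝ) ≤ n + 2),
      Real.norm_of_nonneg (by positivity : (0 : ℝ) ≤ n + 3)]
  have hn0 : (0 : ℝ) ≤ n := n.cast_nonneg
  calc ‖(airyCoeff (n + 3) : ℂ)‖ * r ^ (n + 3) = ‖(airyCoeff (n + 3) : ℂ)‖ * r ^ n * r ^ 3 := by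
        ring
    _ ≤ ‖(airyCoeff (n + 3) : ℂ)‖ * r ^ n * ((n + 2) * (n + 3) / 2) := by gcongr; nlinarith
    _ = 1 / 2 * (‖(airyCoeff n : ℂ)‖ * r ^ n) := by rw [hrec]; ring

lemma derivCoeffs_derivCoeffs_airyCoeff_zero :
    derivCoeffs (derivCoeffs fun n => (airyCoeff n : ℂ)) 0 = 0 := by
  simp [derivCoeffs, airyCoeff_two]

lemma derivCoeffs_derivCoeffs_airyCoeff_succ (n : ℕ) :
    derivCoeffs (derivCoeffs fun n => (airyCoeff n : ℂ)) (n + 1) = airyCoeff n := by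
  rw [← airyCoeff_add_three]
  simp only [derivCoeffs]
  push_cast
  ring

theorem stmt16 :
    Differentiable ℂ Ai ∧ Differentiable ℂ (deriv Ai) ∧
    ∀ z : ℂ, deriv (deriv Ai) z = z * Ai z := by
  have ha := summable_norm_airyCoeff_mul_pow
  have ha' := summable_norm_derivCoeffs_mul_pow ha
  have hderiv : deriv Ai = fun z => ∑' n, derivCoeffs (fun n => (airyCoeff n : ℂ)) n * z ^ n := by
    rw [Ai_eq_tsum]
    exact deriv_tsum_coeff_mul_pow ha
  refine ⟨Ai_eq_tsum ▸ differentiable_tsum_coeff_mul_pow ha,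
    hderiv ▸ differentiable_tsum_coeff_mul_pow ha', fun z => ?_⟩
  rw [hderiv, deriv_tsum_coeff_mul_pow ha', Ai_eq_tsum]
  exact tsum_coeff_mul_pow_eq_mul derivCoeffs_derivCoeffs_airyCoeff_zero
    derivCoeffs_derivCoeffs_airyCoeff_succ (summable_coeff_mul_pow ha z)
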